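/- Let K be a commutative ring, A and B K-algebras projective over K, M an (A,B)-bimodule and N a (B,A)-bimodule, with M projective as a left A-module and as a right B-module, and N projective as a left B-module and as a right A-module. Then for every complex C of A-bimodules (e.g., the bar resolution of A), there is a natural isomorphism of complexes of K-modules (M ⊗_B N) ⊗_{A^e} C ≅ B ⊗_{B^e} (N ⊗_A C ⊗_A M), given by (m ⊗ n) ⊗ u ↦ 1 ⊗ (n ⊗ u ⊗ m). -/

import Mathlib

open TensorProduct MulOpposite

section pd
universe v
/-- `pdLE R n M` : `M` has projective dimension at most `n` as an `R`-module. -/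
def pdLE (R : Type*) [Ring R] : (n : ℕ) → (M : Type v) → [AddCommGroup M] → [Module R M] → Prop
  | 0, M, _, _ => Module.Projective R M
  | n+1, M, _, _ => ∃ (P : Type v) (_ : AddCommGroup P) (_ : Module R P) (f : P →ₗ[R] M),
      Module.Projective R P ∧ Function.Surjective f ∧ pdLE R n (LinearMap.ker f)
end pd

section BT
attribute [local instance 2000] TensorProduct.instModule
variable (R : Type*) [Ring R]
variable (M : Type*) [AddCommGroup M] [Module Rᵐᵒᵖ M]
variable (N : Type*) [AddCommGroup N] [Module R N]

/-- The balancing relations for the tensor product `M ⊗_R N` of a right `R`-module `M`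
and a left `R`-module `N` over a (possibly noncommutative) ring `R`. -/
def balRel : Submodule ℤ (M ⊗[ℤ] N) :=
  Submodule.span ℤ {x | ∃ (m : M) (r : R) (n : N), x = (op r • m) ⊗ₜ[ℤ] n - m ⊗ₜ[ℤ] (r • n)}

/-- The balanced tensor product `M ⊗_R N` over a (possibly noncommutative) ring `R`:
the quotient of `M ⊗_ℤ N` by the balancing relations. -/
def BalancedTensor := (M ⊗[ℤ] N) ⧸ balRel R M N

noncomputable instance : AddCommGroup (BalancedTensor R M N) :=
  inferInstanceAs (AddCommGroup ((M ⊗[ℤ] N) ⧸ balRel R M N))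

/-- The class of `m ⊗ n` in the balanced tensor product. -/
noncomputable def BalancedTensor.mk (m : M) (n : N) : BalancedTensor R M N :=
  Submodule.Quotient.mk (m ⊗ₜ[ℤ] n)

namespace BalancedTensor

section left
variable (S : Type*) [Ring S] [Module S M] [SMulCommClass S Rᵐᵒᵖ M]

lemma lsmul_le (s : S) : balRel R M N ≤ Submodule.comap
    (TensorProduct.map ((DistribMulAction.toAddMonoidHom M s).toIntLinearMap) LinearMap.id)
    (balRel R M N) := by
  refine Submodule.span_le.2 ?_
  rintro x ⟨m, r, n, rfl⟩
  simp only [SetLike.mem_coe, Submodule.mem_comap, map_sub, TensorProduct.map_tmul,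
    AddMonoidHom.coe_toIntLinearMap, DistribMulAction.toAddMonoidHom_apply,
    LinearMap.id_coe, id_eq]
  rw [smul_comm]
  exact Submodule.subset_span ⟨s • m, r, n, rfl⟩

noncomputable def lsmulAux (s : S) : BalancedTensor R M N →ₗ[ℤ] BalancedTensor R M N :=
  Submodule.mapQ _ _ _ (lsmul_le R M N S s)

lemma lsmulAux_mk (s : S) (y : M ⊗[ℤ] N) :
    lsmulAux R M N S s (Submodule.Quotient.mk y) = Submodule.Quotient.mk
      (TensorProduct.map ((DistribMulAction.toAddMonoidHom M s).toIntLinearMap) LinearMap.id y) :=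
  Submodule.mapQ_apply _ _ _ y

noncomputable instance instModuleLeft : Module S (BalancedTensor R M N) where
  smul s x := lsmulAux R M N S s x
  one_smul x := by
    obtain ⟨y, rfl⟩ := Submodule.Quotient.mk_surjective _ x
    show lsmulAux R M N S 1 (Submodule.Quotient.mk y) = _
    rw [lsmulAux_mk]
    congr 1
    induction y using TensorProduct.induction_on with
    | zero => simp
    | tmul m n => simp
    | add a b ha hb => simp only [map_add, ha, hb]
  mul_smul s t x := by
    obtain ⟨y, rfl⟩ := Submodule.Quotient.mk_surjective _ x
    show lsmulAux R M N S (s * t) (Submodule.Quotient.mk y) =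
      lsmulAux R M N S s (lsmulAux R M N S t (Submodule.Quotient.mk y))
    simp only [lsmulAux_mk]
    congr 1
    induction y using TensorProduct.induction_on with
    | zero => simp
    | tmul m n => simp [mul_smul]
    | add a b ha hb => simp only [map_add, ha, hb]
  smul_zero s := map_zero (lsmulAux R M N S s)
  smul_add s x y := map_add (lsmulAux R M N S s) x y
  add_smul s t x := by
    obtain ⟨y, rfl⟩ := Submodule.Quotient.mk_surjective _ x
    show lsmulAux R M N S (s + t) (Submodule.Quotient.mk y) =
      lsmulAux R M N S s (Submodule.Quotient.mk y) + lsmulAux R M N S t (Submodule.Quotient.mk y)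
    simp only [lsmulAux_mk, ← Submodule.Quotient.mk_add]
    congr 1
    induction y using TensorProduct.induction_on with
    | zero => simp
    | tmul m n => simp [add_smul, TensorProduct.add_tmul]
    | add a b ha hb =>
        simp only [map_add] at ha hb ⊢
        rw [ha, hb]; abel
  zero_smul x := by
    obtain ⟨y, rfl⟩ := Submodule.Quotient.mk_surjective _ x
    show lsmulAux R M N S 0 (Submodule.Quotient.mk y) = 0
    rw [lsmulAux_mk, show (0 : BalancedTensor R M N) = Submodule.Quotient.mk 0 from rfl]
    congr 1
    induction y using TensorProduct.induction_on with
    | zero => simp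
    | tmul m n => simp [TensorProduct.zero_tmul]
    | add a b ha hb => rw [map_add, ha, hb]; simp

lemma smul_mk (s : S) (m : M) (n : N) :
    s • (BalancedTensor.mk R M N m n) = BalancedTensor.mk R M N (s • m) n := by
  show lsmulAux R M N S s _ = _
  rw [BalancedTensor.mk, lsmulAux_mk]
  simp [BalancedTensor.mk]
  rfl
end left

section right
variable (S : Type*) [Ring S] [Module S N] [SMulCommClass S R N]

lemma rsmul_le (s : S) : balRel R M N ≤ Submodule.comap
    (TensorProduct.map LinearMap.id ((DistribMulAction.toAddMonoidHom N s).toIntLinearMap))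
    (balRel R M N) := by
  refine Submodule.span_le.2 ?_
  rintro x ⟨m, r, n, rfl⟩
  simp only [SetLike.mem_coe, Submodule.mem_comap, map_sub, TensorProduct.map_tmul,
    AddMonoidHom.coe_toIntLinearMap, DistribMulAction.toAddMonoidHom_apply,
    LinearMap.id_coe, id_eq]
  rw [smul_comm s r n]
  exact Submodule.subset_span ⟨m, r, s • n, rfl⟩

noncomputable def rsmulAux (s : S) : BalancedTensor R M N →ₗ[ℤ] BalancedTensor R M N :=
  Submodule.mapQ _ _ _ (rsmul_le R M N S s)

lemma rsmulAux_mk (s : S) (y : M ⊗[ℤ] N) :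
    rsmulAux R M N S s (Submodule.Quotient.mk y) = Submodule.Quotient.mk
      (TensorProduct.map LinearMap.id ((DistribMulAction.toAddMonoidHom N s).toIntLinearMap) y) :=
  Submodule.mapQ_apply _ _ _ y

noncomputable instance instModuleRight : Module S (BalancedTensor R M N) where
  smul s x := rsmulAux R M N S s x
  one_smul x := by
    obtain ⟨y, rfl⟩ := Submodule.Quotient.mk_surjective _ x
    show rsmulAux R M N S 1 (Submodule.Quotient.mk y) = _
    rw [rsmulAux_mk]
    congr 1
    induction y using TensorProduct.induction_on with
    | zero => simp
    | tmul m n => simp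
    | add a b ha hb => simp only [map_add, ha, hb]
  mul_smul s t x := by
    obtain ⟨y, rfl⟩ := Submodule.Quotient.mk_surjective _ x
    show rsmulAux R M N S (s * t) (Submodule.Quotient.mk y) =
      rsmulAux R M N S s (rsmulAux R M N S t (Submodule.Quotient.mk y))
    simp only [rsmulAux_mk]
    congr 1
    induction y using TensorProduct.induction_on with
    | zero => simp
    | tmul m n => simp [mul_smul]
    | add a b ha hb => simp only [map_add, ha, hb]
  smul_zero s := map_zero (rsmulAux R M N S s)
  smul_add s x y := map_add (rsmulAux R M N S s) x y
  add_smul s t x := by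
    obtain ⟨y, rfl⟩ := Submodule.Quotient.mk_surjective _ x
    show rsmulAux R M N S (s + t) (Submodule.Quotient.mk y) =
      rsmulAux R M N S s (Submodule.Quotient.mk y) + rsmulAux R M N S t (Submodule.Quotient.mk y)
    simp only [rsmulAux_mk, ← Submodule.Quotient.mk_add]
    congr 1
    induction y using TensorProduct.induction_on with
    | zero => simp
    | tmul m n => simp [add_smul, TensorProduct.tmul_add]
    | add a b ha hb =>
        simp only [map_add] at ha hb ⊢
        rw [ha, hb]; abel
  zero_smul x := by
    obtain ⟨y, rfl⟩ := Submodule.Quotient.mk_surjective _ x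
    show rsmulAux R M N S 0 (Submodule.Quotient.mk y) = 0
    rw [rsmulAux_mk, show (0 : BalancedTensor R M N) = Submodule.Quotient.mk 0 from rfl]
    congr 1
    induction y using TensorProduct.induction_on with
    | zero => simp
    | tmul m n => simp [TensorProduct.tmul_zero]
    | add a b ha hb => rw [map_add, ha, hb]; simp

lemma rsmul_mk (s : S) (m : M) (n : N) :
    (instModuleRight R M N S).toSMul.smul s (BalancedTensor.mk R M N m n)
      = BalancedTensor.mk R M N m (s • n) := by
  show rsmulAux R M N S s _ = _
  rw [BalancedTensor.mk, rsmulAux_mk]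
  simp [BalancedTensor.mk]
  rfl
end right

section tmap
variable {M' : Type*} [AddCommGroup M'] [Module Rᵐᵒᵖ M']
variable {N' : Type*} [AddCommGroup N'] [Module R N']

lemma tmapLeft_le (f : M →ₗ[Rᵐᵒᵖ] M') : balRel R M N ≤ Submodule.comap
    (TensorProduct.map (f.toAddMonoidHom.toIntLinearMap) LinearMap.id) (balRel R M' N) := by
  refine Submodule.span_le.2 ?_
  rintro x ⟨m, r, n, rfl⟩
  simp only [SetLike.mem_coe, Submodule.mem_comap, map_sub, TensorProduct.map_tmul,
    AddMonoidHom.coe_toIntLinearMap, LinearMap.toAddMonoidHom_coe, LinearMap.id_coe, id_eq,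
    map_smul]
  exact Submodule.subset_span ⟨f m, r, n, rfl⟩

/-- Functoriality of the balanced tensor product in the left variable. -/
noncomputable def tmapLeft (f : M →ₗ[Rᵐᵒᵖ] M') :
    BalancedTensor R M N →+ BalancedTensor R M' N :=
  (Submodule.mapQ _ _ _ (tmapLeft_le R M N f)).toAddMonoidHom

lemma tmapLeft_mk (f : M →ₗ[Rᵐᵒᵖ] M') (m : M) (n : N) :
    tmapLeft R M N f (BalancedTensor.mk R M N m n) = BalancedTensor.mk R M' N (f m) n := by
  have h := Submodule.mapQ_apply (balRel R M N) (balRel R M' N)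
    (TensorProduct.map (f.toAddMonoidHom.toIntLinearMap) LinearMap.id)
    (h := tmapLeft_le R M N f) (m ⊗ₜ[ℤ] n)
  exact h.trans (by simp [BalancedTensor.mk])

lemma tmapRight_le (f : N →ₗ[R] N') : balRel R M N ≤ Submodule.comap
    (TensorProduct.map LinearMap.id (f.toAddMonoidHom.toIntLinearMap)) (balRel R M N') := by
  refine Submodule.span_le.2 ?_
  rintro x ⟨m, r, n, rfl⟩
  simp only [SetLike.mem_coe, Submodule.mem_comap, map_sub, TensorProduct.map_tmul,
    AddMonoidHom.coe_toIntLinearMap, LinearMap.toAddMonoidHom_coe, LinearMap.id_coe, id_eq,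
    map_smul]
  exact Submodule.subset_span ⟨m, r, f n, rfl⟩

/-- Functoriality of the balanced tensor product in the right variable. -/
noncomputable def tmapRight (f : N →ₗ[R] N') :
    BalancedTensor R M N →+ BalancedTensor R M N' :=
  (Submodule.mapQ _ _ _ (tmapRight_le R M N f)).toAddMonoidHom

lemma tmapRight_mk (f : N →ₗ[R] N') (m : M) (n : N) :
    tmapRight R M N f (BalancedTensor.mk R M N m n) = BalancedTensor.mk R M N' m (f n) := by
  have h := Submodule.mapQ_apply (balRel R M N) (balRel R M N')
    (TensorProduct.map LinearMap.id (f.toAddMonoidHom.toIntLinearMap))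
    (h := tmapRight_le R M N f) (m ⊗ₜ[ℤ] n)
  exact h.trans (by simp [BalancedTensor.mk])

end tmap
end BalancedTensor
end BT
section more
attribute [local instance 2000] TensorProduct.instModule
open TensorProduct MulOpposite
variable (R : Type*) [Ring R]
variable (M : Type*) [AddCommGroup M] [Module Rᵐᵒᵖ M]
variable (N : Type*) [AddCommGroup N] [Module R N]

namespace BalancedTensor

instance smulCommClass_out (S T : Type*) [Ring S] [Ring T]
    [Module S M] [SMulCommClass S Rᵐᵒᵖ M] [Module T N] [SMulCommClass T R N] :
    SMulCommClass S T (BalancedTensor R M N) := by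
  constructor
  intro s t x
  obtain ⟨y, rfl⟩ := Submodule.Quotient.mk_surjective _ x
  show lsmulAux R M N S s (rsmulAux R M N T t (Submodule.Quotient.mk y)) =
    rsmulAux R M N T t (lsmulAux R M N S s (Submodule.Quotient.mk y))
  simp only [lsmulAux_mk, rsmulAux_mk]
  congr 1
  induction y using TensorProduct.induction_on with
  | zero => simp
  | tmul m n => simp
  | add a b ha hb => simp only [map_add, ha, hb]

variable {M' : Type*} [AddCommGroup M'] [Module Rᵐᵒᵖ M']
variable {N' : Type*} [AddCommGroup N'] [Module R N']

/-- `tmapLeft`, bundled as an `S`-linear map for an outer action of `S`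
on the right-hand factor. -/
noncomputable def tmapLeftE (S : Type*) [Ring S] [Module S N] [SMulCommClass S R N]
    (f : M →ₗ[Rᵐᵒᵖ] M') : BalancedTensor R M N →ₗ[S] BalancedTensor R M' N where
  toFun := tmapLeft R M N f
  map_add' := map_add _
  map_smul' := by
    intro s x
    obtain ⟨y, rfl⟩ := Submodule.Quotient.mk_surjective _ x
    show tmapLeft R M N f (rsmulAux R M N S s (Submodule.Quotient.mk y)) =
      rsmulAux R M' N S s (tmapLeft R M N f (Submodule.Quotient.mk y))
    have h1 := Submodule.mapQ_apply (balRel R M N) (balRel R M' N)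
      (TensorProduct.map (f.toAddMonoidHom.toIntLinearMap) LinearMap.id)
      (h := tmapLeft_le R M N f)
    show Submodule.mapQ _ _ (TensorProduct.map (f.toAddMonoidHom.toIntLinearMap) LinearMap.id)
        (tmapLeft_le R M N f) (rsmulAux R M N S s (Submodule.Quotient.mk y)) =
      rsmulAux R M' N S s (Submodule.mapQ _ _
        (TensorProduct.map (f.toAddMonoidHom.toIntLinearMap) LinearMap.id)
        (tmapLeft_le R M N f) (Submodule.Quotient.mk y))
    simp only [rsmulAux_mk, h1]
    congr 1
    induction y using TensorProduct.induction_on with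
    | zero => simp
    | tmul m n => simp
    | add a b ha hb => simp only [map_add, ha, hb]

/-- `tmapRight`, bundled as an `S`-linear map for an outer action of `S`
on the left-hand factor. -/
noncomputable def tmapRightE (S : Type*) [Ring S] [Module S M] [SMulCommClass S Rᵐᵒᵖ M]
    (f : N →ₗ[R] N') : BalancedTensor R M N →ₗ[S] BalancedTensor R M N' where
  toFun := tmapRight R M N f
  map_add' := map_add _
  map_smul' := by
    intro s x
    obtain ⟨y, rfl⟩ := Submodule.Quotient.mk_surjective _ x
    show tmapRight R M N f (lsmulAux R M N S s (Submodule.Quotient.mk y)) =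
      lsmulAux R M N' S s (tmapRight R M N f (Submodule.Quotient.mk y))
    have h1 := Submodule.mapQ_apply (balRel R M N) (balRel R M N')
      (TensorProduct.map LinearMap.id (f.toAddMonoidHom.toIntLinearMap))
      (h := tmapRight_le R M N f)
    show Submodule.mapQ _ _ (TensorProduct.map LinearMap.id (f.toAddMonoidHom.toIntLinearMap))
        (tmapRight_le R M N f) (lsmulAux R M N S s (Submodule.Quotient.mk y)) =
      lsmulAux R M N' S s (Submodule.mapQ _ _
        (TensorProduct.map LinearMap.id (f.toAddMonoidHom.toIntLinearMap))
        (tmapRight_le R M N f) (Submodule.Quotient.mk y))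
    simp only [lsmulAux_mk, h1]
    congr 1
    induction y using TensorProduct.induction_on with
    | zero => simp
    | tmul m n => simp
    | add a b ha hb => simp only [map_add, ha, hb]

end BalancedTensor
end more

section homology
/-- The homology of a pair of composable maps of abelian groups. -/
def homologyAt {T₁ T₂ T₃ : Type*} [AddCommGroup T₁] [AddCommGroup T₂] [AddCommGroup T₃]
    (f : T₁ →+ T₂) (g : T₂ →+ T₃) : Type _ :=
  g.ker ⧸ (f.range.addSubgroupOf g.ker)
end homology

noncomputable instance homologyAt.instAddCommGroup {T₁ T₂ T₃ : Type*} [AddCommGroup T₁]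
    [AddCommGroup T₂] [AddCommGroup T₃] (f : T₁ →+ T₂) (g : T₂ →+ T₃) :
    AddCommGroup (homologyAt f g) :=
  inferInstanceAs (AddCommGroup (g.ker ⧸ (f.range.addSubgroupOf g.ker)))

open MulOpposite TensorProduct
universe u

/-!
Both sides are quotients of `M ⊗ N ⊗ U`. The `Aᵉ`-balancing of `(M ⊗_B N) ⊗_{Aᵉ} U` is exactly
the pair of `A`-balancings of `N ⊗_A U ⊗_A M`, while the `B`-balancing of `M ⊗_B N` matches the
`Bᵉ`-balancing of `B ⊗_{Bᵉ} V`, in which `b ⊗ v = 1 ⊗ b v = 1 ⊗ v b`. Hence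
`(m ⊗ n) ⊗ u ↦ 1 ⊗ (n ⊗ u ⊗ m)` and `b ⊗ (n ⊗ u ⊗ m) ↦ (m ⊗ b n) ⊗ u` are well defined and
mutually inverse.
-/

namespace BalancedTensor

section Basic
variable {R : Type*} [Ring R]
variable {M : Type*} [AddCommGroup M] [Module Rᵐᵒᵖ M]
variable {N : Type*} [AddCommGroup N] [Module R N]

@[simp]
lemma mk_add_left (m m' : M) (n : N) : mk R M N (m + m') n = mk R M N m n + mk R M N m' n :=
  congrArg (Submodule.Quotient.mk (p := balRel R M N)) (add_tmul m m' n)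

@[simp]
lemma mk_add_right (m : M) (n n' : N) : mk R M N m (n + n') = mk R M N m n + mk R M N m n' :=
  congrArg (Submodule.Quotient.mk (p := balRel R M N)) (tmul_add m n n')

@[simp]
lemma mk_zero_left (n : N) : mk R M N 0 n = 0 :=
  congrArg (Submodule.Quotient.mk (p := balRel R M N)) (zero_tmul M n)

@[simp]
lemma mk_zero_right (m : M) : mk R M N m 0 = 0 :=
  congrArg (Submodule.Quotient.mk (p := balRel R M N)) (tmul_zero N m)

lemma mk_op_smul (m : M) (r : R) (n : N) : mk R M N (op r • m) n = mk R M N m (r • n) :=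
  (Submodule.Quotient.eq _).2 (Submodule.subset_span ⟨m, r, n, rfl⟩)

lemma smul_mk_right {S : Type*} [Ring S] [Module S N] [SMulCommClass S R N]
    (s : S) (m : M) (n : N) : s • mk R M N m n = mk R M N m (s • n) :=
  rsmul_mk R M N S s m n

@[elab_as_elim]
lemma induction_on {C : BalancedTensor R M N → Prop} (x : BalancedTensor R M N) (zero : C 0)
    (mk : ∀ m n, C (mk R M N m n)) (add : ∀ x y, C x → C y → C (x + y)) : C x := by
  obtain ⟨y, rfl⟩ := Submodule.Quotient.mk_surjective _ x
  induction y using TensorProduct.induction_on with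
  | zero => exact zero
  | tmul m n => exact mk m n
  | add a b ha hb => exact add _ _ ha hb

variable {P : Type*} [AddCommGroup P]

noncomputable def liftAddHom (f : M →+ N →+ P)
    (hf : ∀ (m : M) (r : R) (n : N), f (op r • m) n = f m (r • n)) :
    BalancedTensor R M N →+ P :=
  ((balRel R M N).liftQ (TensorProduct.liftAddHom f fun k m n => by simp).toIntLinearMap <|
    Submodule.span_le.2 <| by
      rintro _ ⟨m, r, n, rfl⟩
      exact (LinearMap.mem_ker (f := (TensorProduct.liftAddHom f _).toIntLinearMap)).2
        (by simp [hf])).toAddMonoidHom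

@[simp]
lemma liftAddHom_mk (f : M →+ N →+ P)
    (hf : ∀ (m : M) (r : R) (n : N), f (op r • m) n = f m (r • n)) (m : M) (n : N) :
    liftAddHom f hf (mk R M N m n) = f m n := rfl

end Basic

end BalancedTensor

def IsEnvelopingModule (K A U : Type*) [CommRing K] [Ring A] [Algebra K A] [AddCommGroup U]
    [Module A U] [Module Aᵐᵒᵖ U] [Module (Aᵐᵒᵖ ⊗[K] A) U] : Prop :=
  ∀ (a a' : A) (u : U), ((op a : Aᵐᵒᵖ) ⊗ₜ[K] a' : Aᵐᵒᵖ ⊗[K] A) • u = a' • ((op a : Aᵐᵒᵖ) • u)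

def IsEnvelopingModuleOp (K A X : Type*) [CommRing K] [Ring A] [Algebra K A] [AddCommGroup X]
    [Module A X] [Module Aᵐᵒᵖ X] [Module (Aᵐᵒᵖ ⊗[K] A)ᵐᵒᵖ X] : Prop :=
  ∀ (a a' : A) (t : X),
    (op ((op a : Aᵐᵒᵖ) ⊗ₜ[K] a') : (Aᵐᵒᵖ ⊗[K] A)ᵐᵒᵖ) • t = a • ((op a' : Aᵐᵒᵖ) • t)

lemma isEnvelopingModuleOp_self {K A : Type*} [CommRing K] [Ring A] [Algebra K A]
    [Module (Aᵐᵒᵖ ⊗[K] A)ᵐᵒᵖ A]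
    (hA : ∀ (a a' x : A), (op ((op a : Aᵐᵒᵖ) ⊗ₜ[K] a') : (Aᵐᵒᵖ ⊗[K] A)ᵐᵒᵖ) • x = a * x * a') :
    IsEnvelopingModuleOp K A A := fun a a' x => by
  rw [hA, smul_eq_mul, op_smul_eq_mul, mul_assoc]

namespace BalancedTensor

section Enveloping
variable {K : Type*} [CommRing K] {A : Type*} [Ring A] [Algebra K A]
variable {X : Type*} [AddCommGroup X] [Module (Aᵐᵒᵖ ⊗[K] A)ᵐᵒᵖ X]
variable {U : Type*} [AddCommGroup U] [Module (Aᵐᵒᵖ ⊗[K] A) U]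

lemma balanced_of_tmul {P : Type*} [AddCommGroup P] (f : X →+ U →+ P)
    (hf : ∀ (a a' : A) (t : X) (u : U),
      f (op ((op a : Aᵐᵒᵖ) ⊗ₜ[K] a') • t) u = f t (((op a : Aᵐᵒᵖ) ⊗ₜ[K] a') • u))
    (t : X) (r : Aᵐᵒᵖ ⊗[K] A) (u : U) : f (op r • t) u = f t (r • u) := by
  induction r using TensorProduct.induction_on with
  | zero => rw [op_zero, zero_smul (Aᵐᵒᵖ ⊗[K] A)ᵐᵒᵖ t, zero_smul (Aᵐᵒᵖ ⊗[K] A) u]; simp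
  | tmul x a' => exact hf (unop x) a' t u
  | add r r' hr hr' => simp [op_add, add_smul, hr, hr']

variable [Module A U] [Module Aᵐᵒᵖ U] (hU : IsEnvelopingModule K A U)
include hU

section
variable [Module A X] [Module Aᵐᵒᵖ X] (hX : IsEnvelopingModuleOp K A X)
include hX

lemma mk_smul_enveloping (a : A) (t : X) (u : U) :
    mk (Aᵐᵒᵖ ⊗[K] A) X U (a • t) u = mk (Aᵐᵒᵖ ⊗[K] A) X U t ((op a : Aᵐᵒᵖ) • u) := by
  have h := mk_op_smul t ((op a : Aᵐᵒᵖ) ⊗ₜ[K] (1 : A)) u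
  rwa [hX, hU, op_one, one_smul, one_smul] at h

lemma mk_op_smul_enveloping (a : A) (t : X) (u : U) :
    mk (Aᵐᵒᵖ ⊗[K] A) X U ((op a : Aᵐᵒᵖ) • t) u = mk (Aᵐᵒᵖ ⊗[K] A) X U t (a • u) := by
  have h := mk_op_smul t ((op 1 : Aᵐᵒᵖ) ⊗ₜ[K] a) u
  rwa [hX, hU, op_one, one_smul, one_smul] at h

end

variable [Module (Aᵐᵒᵖ ⊗[K] A)ᵐᵒᵖ A] (hA : IsEnvelopingModuleOp K A A)
include hA

lemma mk_eq_mk_one_smul (a : A) (u : U) :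
    mk (Aᵐᵒᵖ ⊗[K] A) A U a u = mk (Aᵐᵒᵖ ⊗[K] A) A U 1 (a • u) := by
  simpa using mk_op_smul_enveloping hU hA a 1 u

lemma mk_eq_mk_one_op_smul (a : A) (u : U) :
    mk (Aᵐᵒᵖ ⊗[K] A) A U a u = mk (Aᵐᵒᵖ ⊗[K] A) A U 1 ((op a : Aᵐᵒᵖ) • u) := by
  simpa using mk_smul_enveloping hU hA a 1 u

end Enveloping

section KeyIsomorphism
variable {K : Type*} [CommRing K] {A B : Type*} [Ring A] [Ring B]
variable {M N U : Type*} [AddCommGroup M] [AddCommGroup N] [AddCommGroup U]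

section KeyMap
variable [Algebra K B] [Module A M] [Module Aᵐᵒᵖ N] [Module A U] [Module Aᵐᵒᵖ U]
  [SMulCommClass Aᵐᵒᵖ A U] [Module (Bᵐᵒᵖ ⊗[K] B)ᵐᵒᵖ B]
  [Module (Bᵐᵒᵖ ⊗[K] B) (BalancedTensor A (BalancedTensor A N U) M)]

noncomputable def keyMap₀ :
    M →+ N →+ U →+ BalancedTensor (Bᵐᵒᵖ ⊗[K] B) B (BalancedTensor A (BalancedTensor A N U) M) :=
  AddMonoidHom.mk' (fun m => AddMonoidHom.mk' (fun n => AddMonoidHom.mk'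
    (fun u => mk _ _ _ 1 (mk _ _ _ (mk _ _ _ n u) m))
    (by intros; simp)) (by intros; ext; simp)) (by intros; ext; simp)

@[simp]
lemma keyMap₀_apply (m : M) (n : N) (u : U) :
    keyMap₀ m n u = mk (Bᵐᵒᵖ ⊗[K] B) B _ 1 (mk A _ M (mk A N U n u) m) := rfl

variable [Module Bᵐᵒᵖ M] [SMulCommClass Bᵐᵒᵖ A M] [Module B N] [SMulCommClass B Aᵐᵒᵖ N]
variable (hB : IsEnvelopingModuleOp K B B)
  (hV : IsEnvelopingModule K B (BalancedTensor A (BalancedTensor A N U) M))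

include hB hV in
lemma keyMap₀_op_smul (m : M) (b : B) (n : N) :
    keyMap₀ (K := K) (A := A) (B := B) (U := U) ((op b : Bᵐᵒᵖ) • m) n = keyMap₀ m (b • n) := by
  ext u
  rw [keyMap₀_apply, keyMap₀_apply, ← smul_mk_right, ← mk_eq_mk_one_op_smul hV hB,
    mk_eq_mk_one_smul hV hB, smul_mk, smul_mk]

noncomputable def keyMap₁ : BalancedTensor B M N →+ U →+
    BalancedTensor (Bᵐᵒᵖ ⊗[K] B) B (BalancedTensor A (BalancedTensor A N U) M) :=
  liftAddHom keyMap₀ (keyMap₀_op_smul hB hV)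

@[simp]
lemma keyMap₁_mk (m : M) (n : N) : keyMap₁ hB hV (mk B M N m n) = keyMap₀ m n := rfl

variable [Algebra K A] [SMulCommClass A Bᵐᵒᵖ M] [SMulCommClass Aᵐᵒᵖ B N]
  [Module (Aᵐᵒᵖ ⊗[K] A) U] [Module (Aᵐᵒᵖ ⊗[K] A)ᵐᵒᵖ (BalancedTensor B M N)]
variable (hU : IsEnvelopingModule K A U) (hMN : IsEnvelopingModuleOp K A (BalancedTensor B M N))

include hU hMN in
lemma keyMap₁_op_tmul_smul (a a' : A) (t : BalancedTensor B M N) (u : U) :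
    keyMap₁ hB hV (op ((op a : Aᵐᵒᵖ) ⊗ₜ[K] a') • t) u =
      keyMap₁ hB hV t (((op a : Aᵐᵒᵖ) ⊗ₜ[K] a') • u) := by
  rw [hMN, hU]
  induction t using induction_on with
  | zero => simp
  | add t t' ht ht' => simp [ht, ht']
  | mk m n =>
    rw [smul_mk_right, smul_mk, keyMap₁_mk, keyMap₁_mk, keyMap₀_apply, keyMap₀_apply,
      ← mk_op_smul, smul_mk_right, mk_op_smul]

noncomputable def keyMap : BalancedTensor (Aᵐᵒᵖ ⊗[K] A) (BalancedTensor B M N) U →+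
    BalancedTensor (Bᵐᵒᵖ ⊗[K] B) B (BalancedTensor A (BalancedTensor A N U) M) :=
  liftAddHom (keyMap₁ hB hV) (balanced_of_tmul _ (keyMap₁_op_tmul_smul hB hV hU hMN))

@[simp]
lemma keyMap_mk (t : BalancedTensor B M N) (u : U) :
    keyMap hB hV hU hMN (mk _ _ U t u) = keyMap₁ hB hV t u := rfl

end KeyMap

section KeyInv
variable [Algebra K A] [Module Bᵐᵒᵖ M] [Module B N]
  [Module (Aᵐᵒᵖ ⊗[K] A)ᵐᵒᵖ (BalancedTensor B M N)] [Module (Aᵐᵒᵖ ⊗[K] A) U]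

noncomputable def keyInv₀ :
    N →+ U →+ M →+ B →+ BalancedTensor (Aᵐᵒᵖ ⊗[K] A) (BalancedTensor B M N) U :=
  AddMonoidHom.mk' (fun n => AddMonoidHom.mk' (fun u => AddMonoidHom.mk' (fun m =>
    AddMonoidHom.mk' (fun b => mk _ _ _ (mk _ _ _ m (b • n)) u)
    (by intros; simp [add_smul])) (by intros; ext; simp)) (by intros; ext; simp))
    (by intros; ext; simp)

@[simp]
lemma keyInv₀_apply (n : N) (u : U) (m : M) (b : B) :
    keyInv₀ n u m b = mk (Aᵐᵒᵖ ⊗[K] A) _ U (mk B M N m (b • n)) u := rfl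

variable [Module A M] [SMulCommClass A Bᵐᵒᵖ M] [Module Aᵐᵒᵖ N] [SMulCommClass Aᵐᵒᵖ B N]
  [SMulCommClass B Aᵐᵒᵖ N] [Module A U] [Module Aᵐᵒᵖ U]
variable (hU : IsEnvelopingModule K A U) (hMN : IsEnvelopingModuleOp K A (BalancedTensor B M N))

include hU hMN in
lemma keyInv₀_op_smul (n : N) (a : A) (u : U) :
    keyInv₀ (K := K) (A := A) (B := B) (M := M) ((op a : Aᵐᵒᵖ) • n) u = keyInv₀ n (a • u) := by
  ext m b
  rw [keyInv₀_apply, keyInv₀_apply, smul_comm, ← smul_mk_right, mk_op_smul_enveloping hU hMN]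

noncomputable def keyInv₁ : BalancedTensor A N U →+ M →+ B →+
    BalancedTensor (Aᵐᵒᵖ ⊗[K] A) (BalancedTensor B M N) U :=
  liftAddHom keyInv₀ (keyInv₀_op_smul hU hMN)

@[simp]
lemma keyInv₁_mk (n : N) (u : U) : keyInv₁ hU hMN (mk A N U n u) = keyInv₀ n u := rfl

variable [SMulCommClass Aᵐᵒᵖ A U]

include hU hMN in
lemma keyInv₁_op_smul (w : BalancedTensor A N U) (a : A) (m : M) :
    keyInv₁ hU hMN ((op a : Aᵐᵒᵖ) • w) m = keyInv₁ hU hMN w (a • m) := by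
  ext b
  induction w using induction_on with
  | zero => simp
  | add w w' hw hw' => simp [hw, hw']
  | mk n u =>
    rw [smul_mk_right, keyInv₁_mk, keyInv₁_mk, keyInv₀_apply, keyInv₀_apply,
      ← mk_smul_enveloping hU hMN, smul_mk]

noncomputable def keyInv₂ : BalancedTensor A (BalancedTensor A N U) M →+ B →+
    BalancedTensor (Aᵐᵒᵖ ⊗[K] A) (BalancedTensor B M N) U :=
  liftAddHom (keyInv₁ hU hMN) (keyInv₁_op_smul hU hMN)

@[simp]
lemma keyInv₂_mk (w : BalancedTensor A N U) (m : M) :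
    keyInv₂ hU hMN (mk A _ M w m) = keyInv₁ hU hMN w m := rfl

variable [Algebra K B] [SMulCommClass Bᵐᵒᵖ A M] [Module (Bᵐᵒᵖ ⊗[K] B)ᵐᵒᵖ B]
  [Module (Bᵐᵒᵖ ⊗[K] B) (BalancedTensor A (BalancedTensor A N U) M)]
variable (hB : IsEnvelopingModuleOp K B B)
  (hV : IsEnvelopingModule K B (BalancedTensor A (BalancedTensor A N U) M))

include hB hV in
lemma keyInv₂_flip_op_tmul_smul (b b' x : B) (v : BalancedTensor A (BalancedTensor A N U) M) :
    (keyInv₂ hU hMN).flip (op ((op b : Bᵐᵒᵖ) ⊗ₜ[K] b') • x) v =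
      (keyInv₂ hU hMN).flip x (((op b : Bᵐᵒᵖ) ⊗ₜ[K] b') • v) := by
  rw [AddMonoidHom.flip_apply, AddMonoidHom.flip_apply, hB, hV]
  induction v using induction_on with
  | zero => simp
  | add v v' hv hv' => simp only [smul_add, map_add, AddMonoidHom.add_apply, hv, hv']
  | mk w m =>
    induction w using induction_on with
    | zero => simp
    | add w w' hw hw' =>
      simp only [mk_add_left, smul_add, map_add, AddMonoidHom.add_apply, hw, hw']
    | mk n u =>
      rw [smul_mk_right, smul_mk, smul_mk]
      simp only [keyInv₂_mk, keyInv₁_mk, keyInv₀_apply, mk_op_smul, smul_eq_mul, op_smul_eq_mul,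
        mul_smul]

noncomputable def keyInv :
    BalancedTensor (Bᵐᵒᵖ ⊗[K] B) B (BalancedTensor A (BalancedTensor A N U) M) →+
      BalancedTensor (Aᵐᵒᵖ ⊗[K] A) (BalancedTensor B M N) U :=
  liftAddHom (keyInv₂ hU hMN).flip (balanced_of_tmul _ (keyInv₂_flip_op_tmul_smul hU hMN hB hV))

@[simp]
lemma keyInv_mk (b : B) (v : BalancedTensor A (BalancedTensor A N U) M) :
    keyInv hU hMN hB hV (mk _ B _ b v) = keyInv₂ hU hMN v b := rfl

end KeyInv

variable [Algebra K A] [Algebra K B]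
  [Module A M] [Module Bᵐᵒᵖ M] [SMulCommClass A Bᵐᵒᵖ M] [SMulCommClass Bᵐᵒᵖ A M]
  [Module B N] [Module Aᵐᵒᵖ N] [SMulCommClass B Aᵐᵒᵖ N] [SMulCommClass Aᵐᵒᵖ B N]
  [Module A U] [Module Aᵐᵒᵖ U] [SMulCommClass Aᵐᵒᵖ A U] [Module (Aᵐᵒᵖ ⊗[K] A) U]
  [Module (Aᵐᵒᵖ ⊗[K] A)ᵐᵒᵖ (BalancedTensor B M N)] [Module (Bᵐᵒᵖ ⊗[K] B)ᵐᵒᵖ B]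
  [Module (Bᵐᵒᵖ ⊗[K] B) (BalancedTensor A (BalancedTensor A N U) M)]
variable (hU : IsEnvelopingModule K A U) (hMN : IsEnvelopingModuleOp K A (BalancedTensor B M N))
  (hB : IsEnvelopingModuleOp K B B)
  (hV : IsEnvelopingModule K B (BalancedTensor A (BalancedTensor A N U) M))

lemma keyInv_keyMap (x : BalancedTensor (Aᵐᵒᵖ ⊗[K] A) (BalancedTensor B M N) U) :
    keyInv hU hMN hB hV (keyMap hB hV hU hMN x) = x := by
  induction x using induction_on with
  | zero => simp
  | add x x' hx hx' => rw [map_add, map_add, hx, hx']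
  | mk t u =>
    induction t using induction_on with
    | zero => simp
    | add t t' ht ht' => rw [mk_add_left, map_add, map_add, ht, ht']
    | mk m n => simp

lemma keyMap_keyInv
    (y : BalancedTensor (Bᵐᵒᵖ ⊗[K] B) B (BalancedTensor A (BalancedTensor A N U) M)) :
    keyMap hB hV hU hMN (keyInv hU hMN hB hV y) = y := by
  induction y using induction_on with
  | zero => simp
  | add y y' hy hy' => rw [map_add, map_add, hy, hy']
  | mk b v =>
    induction v using induction_on with
    | zero => simp
    | add v v' hv hv' => rw [mk_add_right, map_add, map_add, hv, hv']
    | mk w m =>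
      induction w using induction_on with
      | zero => simp
      | add w w' hw hw' => rw [mk_add_left, mk_add_right, map_add, map_add, hw, hw']
      | mk n u =>
        rw [mk_eq_mk_one_smul hV hB, smul_mk, smul_mk]
        simp

noncomputable def keyAddEquiv : BalancedTensor (Aᵐᵒᵖ ⊗[K] A) (BalancedTensor B M N) U ≃+
    BalancedTensor (Bᵐᵒᵖ ⊗[K] B) B (BalancedTensor A (BalancedTensor A N U) M) where
  __ := keyMap hB hV hU hMN
  invFun := keyInv hU hMN hB hV
  left_inv := keyInv_keyMap hU hMN hB hV
  right_inv := keyMap_keyInv hU hMN hB hV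

lemma keyAddEquiv_mk_mk (m : M) (n : N) (u : U) :
    keyAddEquiv hU hMN hB hV (mk (Aᵐᵒᵖ ⊗[K] A) _ U (mk B M N m n) u) =
      mk (Bᵐᵒᵖ ⊗[K] B) B _ 1 (mk A _ M (mk A N U n u) m) := rfl

end KeyIsomorphism

end BalancedTensor

theorem key_isomorphism_of_complexes_general
    (K : Type u) [CommRing K] (A B : Type u) [Ring A] [Ring B] [Algebra K A] [Algebra K B]
    (M : Type u) [AddCommGroup M] [Module A M] [Module Bᵐᵒᵖ M]
    [SMulCommClass A Bᵐᵒᵖ M] [SMulCommClass Bᵐᵒᵖ A M]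
    (N : Type u) [AddCommGroup N] [Module B N] [Module Aᵐᵒᵖ N]
    [SMulCommClass B Aᵐᵒᵖ N] [SMulCommClass Aᵐᵒᵖ B N]
    -- an arbitrary `A`-bimodule `U`, which is also a left `Aᵉ`-module:
    (U : Type u) [AddCommGroup U] [Module A U] [Module Aᵐᵒᵖ U]
    [SMulCommClass Aᵐᵒᵖ A U]
    [Module (Aᵐᵒᵖ ⊗[K] A) U]
    (hU : ∀ (a a' : A) (u : U),
      (((op a : Aᵐᵒᵖ) ⊗ₜ[K] a' : Aᵐᵒᵖ ⊗[K] A)) • u = a' • ((op a : Aᵐᵒᵖ) • u))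
    -- `M ⊗_B N` as a right `Aᵉ`-module, via its outer `(A,A)`-bimodule structure:
    [Module (Aᵐᵒᵖ ⊗[K] A)ᵐᵒᵖ (BalancedTensor B M N)]
    (hMN : ∀ (a a' : A) (t : BalancedTensor B M N),
      ((op ((op a : Aᵐᵒᵖ) ⊗ₜ[K] a') : (Aᵐᵒᵖ ⊗[K] A)ᵐᵒᵖ)) • t = a • ((op a' : Aᵐᵒᵖ) • t))
    -- `B` as a right `Bᵉ`-module:
    [Module (Bᵐᵒᵖ ⊗[K] B)ᵐᵒᵖ B]
    (hBe : ∀ (b b' x : B),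
      ((op ((op b : Bᵐᵒᵖ) ⊗ₜ[K] b') : (Bᵐᵒᵖ ⊗[K] B)ᵐᵒᵖ)) • x = b * x * b')
    -- `N ⊗_A U ⊗_A M` as a left `Bᵉ`-module, via its outer `(B,B)`-bimodule structure:
    [Module (Bᵐᵒᵖ ⊗[K] B) (BalancedTensor A (BalancedTensor A N U) M)]
    (hV : ∀ (b b' : B) (v : BalancedTensor A (BalancedTensor A N U) M),
      (((op b : Bᵐᵒᵖ) ⊗ₜ[K] b' : Bᵐᵒᵖ ⊗[K] B)) • v = b' • ((op b : Bᵐᵒᵖ) • v)) :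
    ∃ e : BalancedTensor (Aᵐᵒᵖ ⊗[K] A) (BalancedTensor B M N) U ≃+
        BalancedTensor (Bᵐᵒᵖ ⊗[K] B) B (BalancedTensor A (BalancedTensor A N U) M),
      ∀ (m : M) (n : N) (u : U),
        e (BalancedTensor.mk (Aᵐᵒᵖ ⊗[K] A) (BalancedTensor B M N) U
            (BalancedTensor.mk B M N m n) u) =
          BalancedTensor.mk (Bᵐᵒᵖ ⊗[K] B) B (BalancedTensor A (BalancedTensor A N U) M)
            1 (BalancedTensor.mk A (BalancedTensor A N U) M
                (BalancedTensor.mk A N U n u) m) :=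
  ⟨BalancedTensor.keyAddEquiv hU hMN (isEnvelopingModuleOp_self hBe) hV,
    BalancedTensor.keyAddEquiv_mk_mk _ _ _ _⟩

/-- For `K`-algebras `A`, `B` projective over `K`, an `(A,B)`-bimodule `M` and a
`(B,A)`-bimodule `N`, projective on either side, and every `A`-bimodule `U`, there is an
isomorphism `(M ⊗_B N) ⊗_{Aᵉ} U ≅ B ⊗_{Bᵉ} (N ⊗_A U ⊗_A M)` given by
`(m ⊗ n) ⊗ u ↦ 1 ⊗ (n ⊗ u ⊗ m)`. (Applied degreewise to a complex of `A`-bimodules,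
e.g. the bar resolution, this is the key isomorphism of complexes.) -/
theorem key_isomorphism_of_complexes
    (K : Type u) [CommRing K] (A B : Type u) [Ring A] [Ring B] [Algebra K A] [Algebra K B]
    (hKA : Module.Projective K A) (hKB : Module.Projective K B)
    (M : Type u) [AddCommGroup M] [Module A M] [Module Bᵐᵒᵖ M]
    [SMulCommClass A Bᵐᵒᵖ M] [SMulCommClass Bᵐᵒᵖ A M]
    (hMl : Module.Projective A M) (hMr : Module.Projective Bᵐᵒᵖ M)
    (N : Type u) [AddCommGroup N] [Module B N] [Module Aᵐᵒᵖ N]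
    [SMulCommClass B Aᵐᵒᵖ N] [SMulCommClass Aᵐᵒᵖ B N]
    (hNl : Module.Projective B N) (hNr : Module.Projective Aᵐᵒᵖ N)
    -- an arbitrary `A`-bimodule `U`, which is also a left `Aᵉ`-module:
    (U : Type u) [AddCommGroup U] [Module A U] [Module Aᵐᵒᵖ U]
    [SMulCommClass A Aᵐᵒᵖ U] [SMulCommClass Aᵐᵒᵖ A U]
    [Module (Aᵐᵒᵖ ⊗[K] A) U]
    (hU : ∀ (a a' : A) (u : U),
      (((op a : Aᵐᵒᵖ) ⊗ₜ[K] a' : Aᵐᵒᵖ ⊗[K] A)) • u = a' • ((op a : Aᵐᵒᵖ) • u))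
    -- `M ⊗_B N` as a right `Aᵉ`-module, via its outer `(A,A)`-bimodule structure:
    [Module (Aᵐᵒᵖ ⊗[K] A)ᵐᵒᵖ (BalancedTensor B M N)]
    (hMN : ∀ (a a' : A) (t : BalancedTensor B M N),
      ((op ((op a : Aᵐᵒᵖ) ⊗ₜ[K] a') : (Aᵐᵒᵖ ⊗[K] A)ᵐᵒᵖ)) • t = a • ((op a' : Aᵐᵒᵖ) • t))
    -- `B` as a right `Bᵉ`-module:
    [Module (Bᵐᵒᵖ ⊗[K] B)ᵐᵒᵖ B]
    (hBe : ∀ (b b' x : B),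
      ((op ((op b : Bᵐᵒᵖ) ⊗ₜ[K] b') : (Bᵐᵒᵖ ⊗[K] B)ᵐᵒᵖ)) • x = b * x * b')
    -- `N ⊗_A U ⊗_A M` as a left `Bᵉ`-module, via its outer `(B,B)`-bimodule structure:
    [Module (Bᵐᵒᵖ ⊗[K] B) (BalancedTensor A (BalancedTensor A N U) M)]
    (hV : ∀ (b b' : B) (v : BalancedTensor A (BalancedTensor A N U) M),
      (((op b : Bᵐᵒᵖ) ⊗ₜ[K] b' : Bᵐᵒᵖ ⊗[K] B)) • v = b' • ((op b : Bᵐᵒᵖ) • v)) :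
    ∃ e : BalancedTensor (Aᵐᵒᵖ ⊗[K] A) (BalancedTensor B M N) U ≃+
        BalancedTensor (Bᵐᵒᵖ ⊗[K] B) B (BalancedTensor A (BalancedTensor A N U) M),
      ∀ (m : M) (n : N) (u : U),
        e (BalancedTensor.mk (Aᵐᵒᵖ ⊗[K] A) (BalancedTensor B M N) U
            (BalancedTensor.mk B M N m n) u) =
          BalancedTensor.mk (Bᵐᵒᵖ ⊗[K] B) B (BalancedTensor A (BalancedTensor A N U) M)
            1 (BalancedTensor.mk A (BalancedTensor A N U) M
                (BalancedTensor.mk A N U n u) m) :=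
  key_isomorphism_of_complexes_general K A B M N U hU hMN hBe hV
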